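/- Suppose (𝒳, S, γ, (Λ_a)_{a∈A}) is a spectral decomposition system for a Euclidean space 𝔥 with {Λ_a : a ∈ A} closed in L(𝒳,𝔥). Let φ : 𝒳 → [−∞,+∞] be S-invariant, let x ∈ 𝒳 with φ(x) ∈ ℝ, and let a ∈ A. Then φ∘γ is Fréchet differentiable at Λ_a x if and only if φ is Fréchet differentiable at x, in which case ∇(φ∘γ)(Λ_a x) = Λ_a(∇φ(x)). -/

import Mathlib

open Filter Topology Set Metric
open scoped RealInnerProductSpace

noncomputable section

/-- A spectral decomposition system `(𝒳, S, γ, (Λ_a)_{a ∈ A})` for the space `H`: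
`S` acts on `𝒳` by linear isometries (via `act`), `γ : H → 𝒳` is the spectral
mapping, each `Λ a : 𝒳 → H` is a linear isometry, and the axioms [A], [B], [C] hold,
with `τ` the `S`-invariant ordering mapping of axiom [A]. -/
structure SDS (𝒳 H : Type*) [NormedAddCommGroup 𝒳] [InnerProductSpace ℝ 𝒳]
    [NormedAddCommGroup H] [InnerProductSpace ℝ H]
    (S : Type*) [Group S] (A : Type*) where
  act : S →* (𝒳 ≃ₗᵢ[ℝ] 𝒳)
  γ : H → 𝒳
  Λ : A → 𝒳 →ₗᵢ[ℝ] H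
  τ : 𝒳 → 𝒳
  τ_inv : ∀ (s : S) (x : 𝒳), τ (act s x) = τ x
  τ_orbit : ∀ x : 𝒳, ∃ s : S, τ x = act s x
  γΛ : ∀ (a : A) (x : 𝒳), γ (Λ a x) = τ x
  decomp : ∀ X : H, ∃ a : A, X = Λ a (γ X)
  inner_le : ∀ X Y : H, ⟪X, Y⟫ ≤ ⟪γ X, γ Y⟫

variable {𝒳 H S A : Type*} [NormedAddCommGroup 𝒳] [InnerProductSpace ℝ 𝒳]
    [NormedAddCommGroup H] [InnerProductSpace ℝ H] [Group S]

/-- The set `{Λ_a : a ∈ A}`, regarded as a subset of the space `L(𝒳, H)` of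
continuous linear maps with the operator norm. -/
def SDS.LambdaSet (𝔖 : SDS 𝒳 H S A) : Set (𝒳 →L[ℝ] H) :=
  {L | ∃ a : A, L = (𝔖.Λ a).toContinuousLinearMap}

/-- `A_X = {a ∈ A : X = Λ_a (γ X)}`. -/
def SDS.AX (𝔖 : SDS 𝒳 H S A) (X : H) : Set A := {a | X = 𝔖.Λ a (𝔖.γ X)}

/-- `f : E → [-∞, +∞]` has Fréchet gradient `g` at `x`: `f x` is finite and
`lim_{z → x, z ≠ x} |f(z) - f(x) - ⟨z - x, g⟩| / ‖z - x‖ = 0` (in particular `f`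
is finite near `x`), in ε-δ form. -/
def EHasGradientAt {E : Type*} [NormedAddCommGroup E] [InnerProductSpace ℝ E]
    (f : E → EReal) (g x : E) : Prop :=
  (∃ r : ℝ, f x = (r : EReal)) ∧ ∀ ε : ℝ, 0 < ε → ∃ δ : ℝ, 0 < δ ∧
    ∀ z : E, ‖z - x‖ < δ → ∃ rz rx : ℝ, f z = (rz : EReal) ∧ f x = (rx : EReal) ∧
      |rz - rx - ⟪z - x, g⟫| ≤ ε * ‖z - x‖

/-- `f` is Fréchet differentiable at `x`: there is a unique gradient `∇f(x)`. -/
def EFDiffAt {E : Type*} [NormedAddCommGroup E] [InnerProductSpace ℝ E]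
    (f : E → EReal) (x : E) : Prop :=
  ∃! g : E, EHasGradientAt f g x

/-!
Since `φ` is `S`-invariant, `φ ∘ γ ∘ Λ_a = φ ∘ τ = φ`, so a gradient `h` of `φ ∘ γ` at `Λ_a x`
pulls back to the gradient `Λ_a* h` of `φ` at `x`.

Conversely let `g = ∇φ(x)` and write `τ x = T x` with `T` in the image of `S`. Since
`φ (γ Z) = φ (T⁻¹ (γ Z))` and `γ` is `1`-Lipschitz (by [C]), it suffices that `Z ↦ ⟪T g, γ Z⟫`
has gradient `Λ_a g` at `Λ_a x`. The points `T⁻¹ τ (x + t g)` lie on the level set of `φ` through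
`x + t g` and are no farther from `x`, which forces them to be tangent to the line `x + t g`;
hence `γ (Λ_a x + t Λ_a g) = τ (x + t g) = τ x + t T g + o(t)`. Comparing `γ Z` with
`γ (Λ_a x ± t Λ_a g)` for `t` proportional to `‖Z - Λ_a x‖` through the Lipschitz bound and
expanding the squared norms gives the gradient of `⟪T g, γ ·⟫`.
-/

open Asymptotics InnerProductSpace

section Gradient

variable {E F : Type*} [NormedAddCommGroup E] [InnerProductSpace ℝ E]
  [NormedAddCommGroup F] [InnerProductSpace ℝ F]

theorem ehasGradientAt_iff [CompleteSpace E] {f : E → EReal} {g x : E} :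
    EHasGradientAt f g x ↔
      (∀ᶠ z in 𝓝 x, ∃ r : ℝ, f z = r) ∧ HasGradientAt (fun z => (f z).toReal) g x := by
  simp only [hasGradientAt_iff_isLittleO, isLittleO_iff, Metric.eventually_nhds_iff,
    dist_eq_norm, Real.norm_eq_abs]
  constructor
  · rintro ⟨-, hbound⟩
    refine ⟨?_, fun c hc => ?_⟩
    · obtain ⟨δ, hδ, hz⟩ := hbound 1 one_pos
      exact ⟨δ, hδ, fun z hzx => by obtain ⟨rz, -, hrz, -⟩ := hz z hzx; exact ⟨rz, hrz⟩⟩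
    · obtain ⟨δ, hδ, hz⟩ := hbound c hc
      refine ⟨δ, hδ, fun z hzx => ?_⟩
      obtain ⟨rz, rx, hrz, hrx, hle⟩ := hz z hzx
      rwa [hrz, hrx, EReal.toReal_coe, EReal.toReal_coe, real_inner_comm]
  · rintro ⟨⟨δ₀, hδ₀, hfin⟩, hbound⟩
    obtain ⟨rx, hrx⟩ := hfin (y := x) (by simpa using hδ₀)
    refine ⟨⟨rx, hrx⟩, fun ε hε => ?_⟩
    obtain ⟨δ, hδ, hz⟩ := hbound hε
    refine ⟨min δ₀ δ, lt_min hδ₀ hδ, fun z hzx => ?_⟩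
    obtain ⟨rz, hrz⟩ := hfin (lt_of_lt_of_le hzx (min_le_left _ _))
    refine ⟨rz, rx, hrz, hrx, ?_⟩
    have := hz (lt_of_lt_of_le hzx (min_le_right _ _))
    rwa [hrz, hrx, EReal.toReal_coe, EReal.toReal_coe, real_inner_comm] at this

theorem EHasGradientAt.unique [CompleteSpace E] {f : E → EReal} {g₁ g₂ x : E}
    (h₁ : EHasGradientAt f g₁ x) (h₂ : EHasGradientAt f g₂ x) : g₁ = g₂ :=
  (ehasGradientAt_iff.1 h₁).2.unique (ehasGradientAt_iff.1 h₂).2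

theorem EHasGradientAt.efDiffAt [CompleteSpace E] {f : E → EReal} {g x : E}
    (h : EHasGradientAt f g x) : EFDiffAt f x :=
  ⟨g, h, fun _ h' => h'.unique h⟩

theorem EHasGradientAt.comp_continuousLinearMap [CompleteSpace E] [CompleteSpace F]
    {f : F → EReal} {h : F} (L : E →L[ℝ] F) {x : E} (hf : EHasGradientAt f h (L x)) :
    EHasGradientAt (fun z => f (L z)) (L.adjoint h) x := by
  obtain ⟨hfin, hgrad⟩ := ehasGradientAt_iff.1 hf
  refine ehasGradientAt_iff.2 ⟨L.continuous.continuousAt.eventually hfin, ?_⟩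
  have hdual : (toDual ℝ F h).comp L = toDual ℝ E (L.adjoint h) := by
    ext z
    simp [ContinuousLinearMap.adjoint_inner_left]
  rw [hasGradientAt_iff_hasFDerivAt, ← hdual]
  exact hgrad.hasFDerivAt.comp x L.hasFDerivAt

theorem HasGradientAt.comp_of_hasGradientAt_inner [CompleteSpace E] [CompleteSpace F]
    {f : E → ℝ} {ψ : F → E} {g : E} {w X₀ : F}
    (hf : HasGradientAt f g (ψ X₀)) (hψ : (fun Z => ψ Z - ψ X₀) =O[𝓝 X₀] fun Z => Z - X₀)
    (hinner : HasGradientAt (fun Z => ⟪g, ψ Z⟫) w X₀) :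
    HasGradientAt (fun Z => f (ψ Z)) w X₀ := by
  have hlim : Tendsto ψ (𝓝 X₀) (𝓝 (ψ X₀)) :=
    tendsto_sub_nhds_zero_iff.1 (hψ.trans_tendsto (tendsto_sub_nhds_zero_iff.2 tendsto_id))
  have hrem := ((hasGradientAt_iff_isLittleO.1 hf).comp_tendsto hlim).trans_isBigO hψ
  refine hasGradientAt_iff_isLittleO.2
    ((hrem.add (hasGradientAt_iff_isLittleO.1 hinner)).congr_left fun Z => ?_)
  simp only [Function.comp, inner_sub_right]
  ring

end Gradient

section Tangency

variable {E : Type*} [NormedAddCommGroup E] [InnerProductSpace ℝ E]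

theorem norm_sub_sq_le_two_inner_of_norm_le {x y z : E} (h : ‖y - x‖ ≤ ‖z - x‖) :
    ‖y - z‖ ^ 2 ≤ 2 * ⟪z - y, z - x⟫ := by
  rw [show y - z = (y - x) - (z - x) by abel, show z - y = (z - x) - (y - x) by abel]
  generalize y - x = a at h ⊢
  generalize z - x = b at h ⊢
  rw [norm_sub_sq_real, inner_sub_left, real_inner_self_eq_norm_sq, real_inner_comm]
  nlinarith [norm_nonneg a]

theorem HasGradientAt.eventually_abs_inner_sub_le [CompleteSpace E] {f : E → ℝ} {g x : E}
    (hf : HasGradientAt f g x) {ε : ℝ} (hε : 0 < ε) :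
    ∀ᶠ z in 𝓝 x, ∀ y, ‖y - x‖ ≤ ‖z - x‖ → f y = f z → |⟪g, z - y⟫| ≤ ε * ‖z - x‖ := by
  have hbound := isLittleO_iff.1 (hasGradientAt_iff_isLittleO.1 hf) (half_pos hε)
  obtain ⟨δ, hδ, hball⟩ := Metric.eventually_nhds_iff.1 hbound
  refine Metric.eventually_nhds_iff.2 ⟨δ, hδ, fun z hz y hyz hfyz => ?_⟩
  rw [dist_eq_norm] at hz
  have hy := hball (y := y) (by rw [dist_eq_norm]; exact lt_of_le_of_lt hyz hz)
  have hz := hball (y := z) (by rwa [dist_eq_norm])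
  simp only [Real.norm_eq_abs] at hy hz
  have hsplit : ⟪g, z - y⟫ = (f y - f x - ⟪g, y - x⟫) - (f z - f x - ⟪g, z - x⟫) := by
    rw [hfyz, show z - y = (z - x) - (y - x) by abel, inner_sub_right]; ring
  rw [hsplit]
  calc _ ≤ |f y - f x - ⟪g, y - x⟫| + |f z - f x - ⟪g, z - x⟫| := abs_sub _ _
    _ ≤ ε / 2 * ‖y - x‖ + ε / 2 * ‖z - x‖ := add_le_add hy hz
    _ ≤ ε * ‖z - x‖ := by nlinarith

theorem HasGradientAt.isLittleO_sub_line [CompleteSpace E] {f : E → ℝ} {g x : E}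
    (hf : HasGradientAt f g x) {ψ : ℝ → E} (hψf : ∀ t, f (ψ t) = f (x + t • g))
    (hψx : ∀ t, ‖ψ t - x‖ ≤ ‖t • g‖) :
    (fun t => ψ t - (x + t • g)) =o[𝓝 0] fun t => t := by
  refine isLittleO_iff.2 fun c hc => ?_
  set ε := c ^ 2 / (2 * ‖g‖ + 1)
  have hε : 0 < ε := by positivity
  have hεg : 2 * ε * ‖g‖ ≤ c ^ 2 := by
    have hεc : ε * (2 * ‖g‖ + 1) = c ^ 2 := div_mul_cancel₀ _ (by positivity)
    nlinarith
  have hline : Tendsto (fun t : ℝ => x + t • g) (𝓝 0) (𝓝 x) := by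
    simpa using ((continuous_id.smul continuous_const).const_add x).tendsto (0 : ℝ)
  filter_upwards [hline.eventually (hf.eventually_abs_inner_sub_le hε)] with t ht
  have hlevel := ht (ψ t) (by simpa using hψx t) (hψf t)
  simp only [add_sub_cancel_left, norm_smul, Real.norm_eq_abs] at hlevel hψx ⊢
  have hsq : ‖ψ t - (x + t • g)‖ ^ 2 ≤ (c * |t|) ^ 2 :=
    calc ‖ψ t - (x + t • g)‖ ^ 2 ≤ 2 * ⟪x + t • g - ψ t, x + t • g - x⟫ :=
          norm_sub_sq_le_two_inner_of_norm_le (by simpa [norm_smul] using hψx t)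
      _ = 2 * t * ⟪g, x + t • g - ψ t⟫ := by
          rw [add_sub_cancel_left, real_inner_smul_right, real_inner_comm]; ring
      _ ≤ 2 * (|t| * |⟪g, x + t • g - ψ t⟫|) := by
          rw [← abs_mul, mul_assoc]
          gcongr
          exact le_abs_self _
      _ ≤ 2 * (|t| * (ε * (|t| * ‖g‖))) := by gcongr
      _ ≤ (c * |t|) ^ 2 := by nlinarith [sq_abs t, abs_nonneg t]
  exact (pow_le_pow_iff_left₀ (norm_nonneg _) (by positivity) two_ne_zero).1 hsq

end Tangency

section Lipschitz

variable {E F : Type*} [NormedAddCommGroup E] [InnerProductSpace ℝ E]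
  [NormedAddCommGroup F] [InnerProductSpace ℝ F]

theorem two_mul_inner_sub_le_of_norm_sub_le {u G : E} {v w : F} (hG : ‖G‖ = ‖w‖) {r e : ℝ}
    (he : 0 ≤ e) (h : ‖u - r • G‖ ≤ ‖v - r • w‖ + e) :
    2 * r * (⟪w, v⟫ - ⟪G, u⟫) ≤ ‖v‖ ^ 2 + 2 * e * (‖v‖ + |r| * ‖w‖) + e ^ 2 := by
  have hu : ‖u - r • G‖ ^ 2 = ‖u‖ ^ 2 - 2 * (r * ⟪G, u⟫) + (|r| * ‖w‖) ^ 2 := by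
    rw [norm_sub_sq_real, real_inner_smul_right, norm_smul, Real.norm_eq_abs, hG,
      real_inner_comm]
  have hv : ‖v - r • w‖ ^ 2 = ‖v‖ ^ 2 - 2 * (r * ⟪w, v⟫) + (|r| * ‖w‖) ^ 2 := by
    rw [norm_sub_sq_real, real_inner_smul_right, norm_smul, Real.norm_eq_abs, real_inner_comm]
  have hvw : ‖v - r • w‖ ≤ ‖v‖ + |r| * ‖w‖ := by
    simpa [norm_smul] using norm_sub_le v (r • w)
  have hsq := pow_le_pow_left₀ (norm_nonneg _) h 2
  nlinarith [sq_nonneg ‖u‖, mul_le_mul_of_nonneg_left hvw he]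

theorem hasGradientAt_inner_comp_of_isLittleO [CompleteSpace F] {γ : F → E}
    (hγ : ∀ X Y, ‖γ X - γ Y‖ ≤ ‖X - Y‖) {X₀ w : F} {G : E} (hG : ‖G‖ = ‖w‖)
    (hline : (fun r : ℝ => γ (X₀ + r • w) - γ X₀ - r • G) =o[𝓝 0] fun r => r) :
    HasGradientAt (fun Z => ⟪G, γ Z⟫) w X₀ := by
  refine hasGradientAt_iff_isLittleO.2 (isLittleO_iff.2 fun c hc => ?_)
  set η := c ^ 2 / (3 * c + 2 * ‖w‖)
  have hηc : 2 * η * (c + ‖w‖) + η ^ 2 ≤ c ^ 2 := by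
    have hη : η * (3 * c + 2 * ‖w‖) = c ^ 2 := div_mul_cancel₀ _ (by positivity)
    have hη₀ : 0 ≤ η := by positivity
    have hηle : η ≤ c := by nlinarith [mul_nonneg hη₀ (norm_nonneg w)]
    nlinarith [mul_le_mul_of_nonneg_left hηle hη₀]
  obtain ⟨δ, hδ, hsmall⟩ :=
    Metric.eventually_nhds_iff.1 (isLittleO_iff.1 hline (show 0 < η by positivity))
  refine Metric.eventually_nhds_iff.2 ⟨c * δ, by positivity, fun Z hZ => ?_⟩
  rw [dist_eq_norm] at hZ
  set v := Z - X₀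
  set d := ‖v‖
  set u := γ Z - γ X₀
  suffices |⟪w, v⟫ - ⟪G, u⟫| ≤ c * d by
    rwa [Real.norm_eq_abs, ← inner_sub_right, abs_sub_comm]
  rcases (norm_nonneg v).eq_or_lt with hd | hd
  · have hZ₀ : Z = X₀ := sub_eq_zero.1 (norm_eq_zero.1 hd.symm)
    simp only [u, v, hZ₀, sub_self, inner_zero_right, abs_zero]
    positivity
  -- compare `γ Z` with `γ (X₀ + r • w)` for the two `r` of size `d / c`
  have key : ∀ r, |r| = d / c → 2 * r * (⟪w, v⟫ - ⟪G, u⟫) ≤ 2 * d ^ 2 := by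
    intro r hr
    have hrδ : |r| < δ := by rw [hr, div_lt_iff₀ hc]; linarith
    have he := hsmall (y := r) (by simpa using hrδ)
    simp only [Real.norm_eq_abs, hr] at he
    have hnear : ‖u - r • G‖ ≤ ‖v - r • w‖ + η * (d / c) :=
      calc ‖u - r • G‖ = ‖(γ Z - γ (X₀ + r • w)) + (γ (X₀ + r • w) - γ X₀ - r • G)‖ := by
            congr 1; simp only [u]; abel
        _ ≤ ‖Z - (X₀ + r • w)‖ + η * (d / c) := norm_add_le_of_le (hγ _ _) he
        _ = ‖v - r • w‖ + η * (d / c) := by rw [sub_add_eq_sub_sub]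
    calc 2 * r * (⟪w, v⟫ - ⟪G, u⟫)
        ≤ d ^ 2 + 2 * (η * (d / c)) * (d + |r| * ‖w‖) + (η * (d / c)) ^ 2 :=
          two_mul_inner_sub_le_of_norm_sub_le hG (by positivity) hnear
      _ = (d / c) ^ 2 * (c ^ 2 + 2 * η * (c + ‖w‖) + η ^ 2) := by
          rw [hr]; field_simp
      _ ≤ (d / c) ^ 2 * (2 * c ^ 2) := by gcongr; linarith
      _ = 2 * d ^ 2 := by field_simp
  have hdc : 0 < d / c := by positivity
  have hsq : d / c * (c * d) = d ^ 2 := by field_simp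
  rw [abs_le]
  constructor
  · have := key (-(d / c)) (by rw [abs_neg, abs_of_pos hdc])
    nlinarith
  · have := key (d / c) (abs_of_pos hdc)
    nlinarith

end Lipschitz

namespace SDS

variable (𝔖 : SDS 𝒳 H S A)

theorem norm_γ (X : H) : ‖𝔖.γ X‖ = ‖X‖ := by
  obtain ⟨a, ha⟩ := 𝔖.decomp X
  conv_rhs => rw [ha, (𝔖.Λ a).norm_map]

theorem norm_γ_sub_γ_le (X Y : H) : ‖𝔖.γ X - 𝔖.γ Y‖ ≤ ‖X - Y‖ := by
  have hsq : ‖𝔖.γ X - 𝔖.γ Y‖ ^ 2 ≤ ‖X - Y‖ ^ 2 := by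
    rw [norm_sub_sq_real, norm_sub_sq_real, 𝔖.norm_γ, 𝔖.norm_γ]
    linarith [𝔖.inner_le X Y]
  exact (pow_le_pow_iff_left₀ (norm_nonneg _) (norm_nonneg _) two_ne_zero).1 hsq

theorem norm_τ_sub_τ_le (a : A) (u v : 𝒳) : ‖𝔖.τ u - 𝔖.τ v‖ ≤ ‖u - v‖ := by
  rw [← 𝔖.γΛ a u, ← 𝔖.γΛ a v]
  simpa [← map_sub] using 𝔖.norm_γ_sub_γ_le (𝔖.Λ a u) (𝔖.Λ a v)

variable {𝔖} {β : Type*} {φ : 𝒳 → β}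

theorem comp_τ (hφ : ∀ s z, φ (𝔖.act s z) = φ z) (z : 𝒳) : φ (𝔖.τ z) = φ z := by
  obtain ⟨s, hs⟩ := 𝔖.τ_orbit z
  rw [hs, hφ]

theorem comp_γ_Λ (hφ : ∀ s z, φ (𝔖.act s z) = φ z) (a : A) (z : 𝒳) :
    φ (𝔖.γ (𝔖.Λ a z)) = φ z := by
  rw [𝔖.γΛ, comp_τ hφ]

theorem comp_act_symm (hφ : ∀ s z, φ (𝔖.act s z) = φ z) (s : S) (z : 𝒳) :
    φ ((𝔖.act s).symm z) = φ z := by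
  conv_rhs => rw [← (𝔖.act s).apply_symm_apply z, hφ]

theorem isLittleO_τ_add_smul [CompleteSpace 𝒳] {f : 𝒳 → ℝ} (hf : ∀ s z, f (𝔖.act s z) = f z)
    (a : A) {g x : 𝒳} (hfx : HasGradientAt f g x) {s : S} (hs : 𝔖.τ x = 𝔖.act s x) :
    (fun t : ℝ => 𝔖.τ (x + t • g) - 𝔖.τ x - t • 𝔖.act s g) =o[𝓝 0] fun t => t := by
  set T := 𝔖.act s
  have hTx : T.symm (𝔖.τ x) = x := by rw [hs, T.symm_apply_apply]
  have hline := hfx.isLittleO_sub_line (ψ := fun t => T.symm (𝔖.τ (x + t • g)))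
    (fun t => by rw [comp_act_symm hf, comp_τ hf])
    (fun t => by
      have hτ := 𝔖.norm_τ_sub_τ_le a (x + t • g) x
      rwa [← T.symm.norm_map, map_sub, hTx, add_sub_cancel_left] at hτ)
  rw [← isLittleO_norm_left] at hline ⊢
  refine hline.congr_left fun t => ?_
  rw [← T.norm_map, map_sub, T.apply_symm_apply, map_add, map_smul, ← hs, sub_add_eq_sub_sub]

theorem hasGradientAt_comp_γ [CompleteSpace 𝒳] [CompleteSpace H] {f : 𝒳 → ℝ}
    (hf : ∀ s z, f (𝔖.act s z) = f z) (a : A) {g x : 𝒳} (hfx : HasGradientAt f g x) :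
    HasGradientAt (fun Z => f (𝔖.γ Z)) (𝔖.Λ a g) (𝔖.Λ a x) := by
  obtain ⟨s, hs⟩ := 𝔖.τ_orbit x
  set T := 𝔖.act s
  have hψ : T.symm (𝔖.γ (𝔖.Λ a x)) = x := by rw [𝔖.γΛ, hs, T.symm_apply_apply]
  have hinner : HasGradientAt (fun Z => ⟪T g, 𝔖.γ Z⟫) (𝔖.Λ a g) (𝔖.Λ a x) := by
    refine hasGradientAt_inner_comp_of_isLittleO 𝔖.norm_γ_sub_γ_le
      (by rw [T.norm_map, (𝔖.Λ a).norm_map]) ?_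
    simpa only [← map_smul, ← map_add, 𝔖.γΛ] using 𝔖.isLittleO_τ_add_smul hf a hfx hs
  rw [← hψ] at hfx
  have hcomp := hfx.comp_of_hasGradientAt_inner (ψ := fun Z => T.symm (𝔖.γ Z))
    (IsBigO.of_bound 1 (Eventually.of_forall fun Z => by
      rw [one_mul, ← map_sub, T.symm.norm_map]
      exact 𝔖.norm_γ_sub_γ_le Z (𝔖.Λ a x)))
    (by simpa only [T.inner_map_eq_flip] using hinner)
  simpa only [T, comp_act_symm hf] using hcomp

theorem ehasGradientAt_comp_γ [CompleteSpace 𝒳] [CompleteSpace H] {φ : 𝒳 → EReal}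
    (hφ : ∀ s z, φ (𝔖.act s z) = φ z) (a : A) {g x : 𝒳} (hg : EHasGradientAt φ g x) :
    EHasGradientAt (fun Z => φ (𝔖.γ Z)) (𝔖.Λ a g) (𝔖.Λ a x) := by
  obtain ⟨hfin, hgrad⟩ := ehasGradientAt_iff.1 hg
  refine ehasGradientAt_iff.2 ⟨?_, 𝔖.hasGradientAt_comp_γ (fun s z => by rw [hφ]) a hgrad⟩
  obtain ⟨s, hs⟩ := 𝔖.τ_orbit x
  have hγ : LipschitzWith 1 𝔖.γ := LipschitzWith.of_dist_le_mul fun X Y => by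
    simpa [dist_eq_norm] using 𝔖.norm_γ_sub_γ_le X Y
  have hlim : Tendsto ((𝔖.act s).symm ∘ 𝔖.γ) (𝓝 (𝔖.Λ a x)) (𝓝 x) :=
    ((𝔖.act s).symm.continuous.comp hγ.continuous).tendsto' _ _ (by simp [𝔖.γΛ, hs])
  filter_upwards [hlim.eventually hfin] with Z hZ
  simpa only [Function.comp_apply, comp_act_symm hφ] using hZ

theorem ehasGradientAt_of_comp_γ [CompleteSpace 𝒳] [CompleteSpace H] {φ : 𝒳 → EReal}
    (hφ : ∀ s z, φ (𝔖.act s z) = φ z) (a : A) {h : H} {x : 𝒳}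
    (hF : EHasGradientAt (fun Z => φ (𝔖.γ Z)) h (𝔖.Λ a x)) :
    EHasGradientAt φ ((𝔖.Λ a).toContinuousLinearMap.adjoint h) x := by
  simpa only [LinearIsometry.coe_toContinuousLinearMap, comp_γ_Λ hφ] using
    hF.comp_continuousLinearMap (𝔖.Λ a).toContinuousLinearMap

end SDS

theorem frechet_diff_lambda_iff_general
    [FiniteDimensional ℝ 𝒳] [FiniteDimensional ℝ H]
    (𝔖 : SDS 𝒳 H S A)
    (φ : 𝒳 → EReal) (hφ : ∀ (s : S) (x : 𝒳), φ (𝔖.act s x) = φ x)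
    (x : 𝒳) (a : A) :
    (EFDiffAt (fun Z => φ (𝔖.γ Z)) (𝔖.Λ a x) ↔ EFDiffAt φ x) ∧
    (∀ g : 𝒳, EHasGradientAt φ g x →
      EHasGradientAt (fun Z => φ (𝔖.γ Z)) (𝔖.Λ a g) (𝔖.Λ a x)) := by
  have hgrad g (hg : EHasGradientAt φ g x) := 𝔖.ehasGradientAt_comp_γ hφ a hg
  refine ⟨⟨fun ⟨_, hF, _⟩ => (𝔖.ehasGradientAt_of_comp_γ hφ a hF).efDiffAt,
    fun ⟨g, hg, _⟩ => (hgrad g hg).efDiffAt⟩, hgrad⟩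

/-- For an `S`-invariant `φ : 𝒳 → [-∞, +∞]`, `x ∈ 𝒳` with `φ(x) ∈ ℝ` and `a ∈ A`:
`φ ∘ γ` is Fréchet differentiable at `Λ_a x` iff `φ` is Fréchet differentiable at `x`,
in which case `∇(φ ∘ γ)(Λ_a x) = Λ_a (∇φ(x))`. -/
theorem frechet_diff_lambda_iff
    [FiniteDimensional ℝ 𝒳] [FiniteDimensional ℝ H]
    (𝔖 : SDS 𝒳 H S A) (hcl : IsClosed 𝔖.LambdaSet)
    (φ : 𝒳 → EReal) (hφ : ∀ (s : S) (x : 𝒳), φ (𝔖.act s x) = φ x)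
    (x : 𝒳) (hx : ∃ r : ℝ, φ x = (r : EReal)) (a : A) :
    (EFDiffAt (fun Z => φ (𝔖.γ Z)) (𝔖.Λ a x) ↔ EFDiffAt φ x) ∧
    (∀ g : 𝒳, EHasGradientAt φ g x →
      EHasGradientAt (fun Z => φ (𝔖.γ Z)) (𝔖.Λ a g) (𝔖.Λ a x)) :=
  frechet_diff_lambda_iff_general 𝔖 φ hφ x a
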